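/- arXiv:2002.02525 — 3 statements merged into one kernel-verified Lean document; each statement's English description precedes it below -/
import Mathlib

section
/- Under the factor model, the effective rank of the covariance satisfies r_e(Σ_X) ≤ K + (1/ξ)·r_e(Σ_E), where Σ_X = AΣ_Z Aᵀ + Σ_E and ξ = λ_K(AΣ_Z Aᵀ)/‖Σ_E‖. -/
open Matrix

/-- The `i`-th largest eigenvalue (0-indexed) of a Hermitian real matrix. -/
noncomputable def eigDesc {n : ℕ} {M : Matrix (Fin n) (Fin n) ℝ} (hM : M.IsHermitian)
    (i : Fin n) : ℝ :=
  (hM.eigenvalues ∘ Tuple.sort hM.eigenvalues) i.rev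

open Finset
open scoped MatrixOrder

/-!
Write `M = A Σ_Z Aᵀ` and `c = λ₁(Σ_X)`. Since `M ≤ Σ_X` in the Loewner order, every
eigenvalue of `M` is at most `c`; as `M` has rank at most `K`, this gives `tr M ≤ K c`.
Moreover `λ_K(M) ≤ c`, so `tr Σ_E / c ≤ tr Σ_E / λ_K(M) = (1/ξ) · r_e(Σ_E)`.
-/

namespace Matrix.IsHermitian

variable {n : Type*} [Fintype n] [DecidableEq n]

theorem eigenvalues_le_of_le {M X : Matrix n n ℝ} (hM : M.IsHermitian) (hX : X.IsHermitian)
    (hle : M ≤ X) {c : ℝ} (hc : ∀ i, hX.eigenvalues i ≤ c) (j : n) :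
    hM.eigenvalues j ≤ c := by
  have hXc : X ≤ algebraMap ℝ _ c := by
    refine le_algebraMap_of_spectrum_le ?_ hX.isSelfAdjoint
    rw [hX.spectrum_real_eq_range_eigenvalues]
    rintro _ ⟨i, rfl⟩
    exact hc i
  exact (le_algebraMap_iff_spectrum_le hM.isSelfAdjoint).1 (hle.trans hXc) _
    (hM.eigenvalues_mem_spectrum_real j)

theorem trace_le_rank_mul {M : Matrix n n ℝ} (hM : M.IsHermitian) {c : ℝ}
    (hc : ∀ i, hM.eigenvalues i ≤ c) : M.trace ≤ M.rank * c := by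
  classical
  have hcard : #{i | hM.eigenvalues i ≠ 0} = M.rank := by
    rw [hM.rank_eq_card_non_zero_eigs, Fintype.card_subtype]
  calc M.trace = ∑ i with hM.eigenvalues i ≠ 0, hM.eigenvalues i := by
        rw [sum_filter_ne_zero, hM.trace_eq_sum_eigenvalues]
        simp
    _ ≤ #{i | hM.eigenvalues i ≠ 0} • c := sum_le_card_nsmul _ _ _ fun i _ ↦ hc i
    _ = M.rank * c := by rw [hcard, nsmul_eq_mul]

end Matrix.IsHermitian

section eigDesc

variable {n : ℕ} {M : Matrix (Fin n) (Fin n) ℝ}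

theorem eigDesc_mem_range (hM : M.IsHermitian) (i : Fin n) :
    eigDesc hM i ∈ Set.range hM.eigenvalues :=
  ⟨_, rfl⟩

theorem eigenvalues_le_eigDesc_zero (hM : M.IsHermitian) (hn : 0 < n) (i : Fin n) :
    hM.eigenvalues i ≤ eigDesc hM ⟨0, hn⟩ := by
  obtain ⟨j, rfl⟩ := (Tuple.sort hM.eigenvalues).surjective i
  exact Tuple.monotone_sort hM.eigenvalues (Fin.le_rev_iff.2 (Nat.zero_le _))

theorem Matrix.PosSemidef.eigDesc_nonneg (hM : M.PosSemidef) (i : Fin n) :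
    0 ≤ eigDesc hM.1 i := by
  obtain ⟨j, hj⟩ := eigDesc_mem_range hM.1 i
  exact hj ▸ hM.eigenvalues_nonneg j

end eigDesc

/-- Under the factor model, `r_e(Σ_X) ≤ K + (1/ξ)·r_e(Σ_E)`, where
`Σ_X = AΣ_ZAᵀ + Σ_E`, `ξ = λ_K(AΣ_ZAᵀ)/‖Σ_E‖`, `r_e(Q) = tr(Q)/‖Q‖`, and for a
positive semidefinite matrix the operator norm equals the largest eigenvalue. -/
theorem stmt0 {p K : ℕ} (hK : 0 < K) (hKp : K ≤ p)
    (A : Matrix (Fin p) (Fin K) ℝ) (SZ : Matrix (Fin K) (Fin K) ℝ)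
    (SE : Matrix (Fin p) (Fin p) ℝ)
    (hSE : SE.PosSemidef)
    (hZA : (A * SZ * Aᵀ).IsHermitian)
    (hX : (A * SZ * Aᵀ + SE).IsHermitian)
    (ξ : ℝ) (hξdef : ξ = eigDesc hZA ⟨K - 1, by omega⟩ / eigDesc hSE.1 ⟨0, by omega⟩)
    (hξpos : 0 < ξ) :
    (A * SZ * Aᵀ + SE).trace / eigDesc hX ⟨0, by omega⟩
      ≤ K + (1 / ξ) * (SE.trace / eigDesc hSE.1 ⟨0, by omega⟩) := by
  set c := eigDesc hX ⟨0, by omega⟩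
  set lE := eigDesc hSE.1 ⟨0, by omega⟩
  set μ := eigDesc hZA ⟨K - 1, by omega⟩ with hμdef
  have hM_le_c : ∀ i, hZA.eigenvalues i ≤ c :=
    hZA.eigenvalues_le_of_le hX (le_add_of_nonneg_right (nonneg_iff_posSemidef.2 hSE))
      (eigenvalues_le_eigDesc_zero hX _)
  have hμc : μ ≤ c := by
    obtain ⟨j, hj⟩ := eigDesc_mem_range hZA ⟨K - 1, by omega⟩
    rw [hμdef, ← hj]
    exact hM_le_c j
  obtain ⟨hμ, hlE⟩ : 0 < μ ∧ 0 < lE := by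
    rw [hξdef] at hξpos
    exact (div_pos_iff.1 hξpos).resolve_right fun h ↦ (hSE.eigDesc_nonneg _).not_gt h.2
  have htrM : (A * SZ * Aᵀ).trace ≤ K * c := by
    have hrank : (A * SZ * Aᵀ).rank ≤ K :=
      ((rank_mul_le_left _ _).trans (rank_mul_le_left _ _)).trans (rank_le_width A)
    exact (hZA.trace_le_rank_mul hM_le_c).trans
      (mul_le_mul_of_nonneg_right (by exact_mod_cast hrank) (hμ.le.trans hμc))
  have hξ : 1 / ξ * (SE.trace / lE) = SE.trace / μ := by
    rw [hξdef]
    field_simp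
  rw [hξ, trace_add, add_div]
  gcongr
  · exact (div_le_iff₀ (hμ.trans_le hμc)).2 htrM
  · exact hSE.trace_nonneg
end

section
/- If Σ_E = 0 and A, Σ_Z are full rank, the best linear prediction vector is α* = A⁺ᵀβ, and it satisfies ‖α*‖²_{Σ_X} = ‖β‖²_{Σ_Z} and ‖α*‖² = βᵀ(AᵀA)⁻¹β. -/
open Matrix

/-!
Full column rank makes `AᵀA` invertible, and then the Penrose equations force
`A⁺ = (AᵀA)⁻¹Aᵀ`, a left inverse of `A` with `A⁺A⁺ᵀ = (AᵀA)⁻¹`; this gives the two norm identities.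
For `Σ = AΣ_ZAᵀ`, the matrix `Σ⁺Σ` fixes the column space of `Σᵀ`, which contains `A(AᵀA)⁻¹`
because `Σ_Z` is invertible. Since `Σ A(AᵀA)⁻¹ = AΣ_Z`, it follows that
`Σ⁺AΣ_Z = Σ⁺Σ A(AᵀA)⁻¹ = A(AᵀA)⁻¹ = A⁺ᵀ`.
-/

/-- `Bp` is the Moore–Penrose pseudoinverse of `B`. -/
def IsMP {m n : ℕ} (B : Matrix (Fin m) (Fin n) ℝ) (Bp : Matrix (Fin n) (Fin m) ℝ) : Prop :=
  B * Bp * B = B ∧ Bp * B * Bp = Bp ∧ (B * Bp)ᵀ = B * Bp ∧ (Bp * B)ᵀ = Bp * B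

theorem Matrix.isUnit_of_rank_eq_card {n 𝕜 : Type*} [Fintype n] [DecidableEq n] [Field 𝕜]
    {B : Matrix n n 𝕜} (h : B.rank = Fintype.card n) : IsUnit B := by
  rw [← mulVec_surjective_iff_isUnit, ← Matrix.coe_mulVecLin, ← LinearMap.range_eq_top]
  exact Submodule.eq_top_of_finrank_eq <| by
    rw [← Matrix.rank, h, Module.finrank_fintype_fun_eq_card]

theorem Matrix.isUnit_det_transpose_mul_self_of_rank_eq {m n 𝕜 : Type*} [Fintype m] [Fintype n]
    [DecidableEq n] [Field 𝕜] [LinearOrder 𝕜] [IsStrictOrderedRing 𝕜] {A : Matrix m n 𝕜}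
    (hA : A.rank = Fintype.card n) : IsUnit (Aᵀ * A).det :=
  (isUnit_iff_isUnit_det _).1 <| isUnit_of_rank_eq_card <| by rw [rank_transpose_mul_self, hA]

namespace IsMP

variable {m n : ℕ} {B : Matrix (Fin m) (Fin n) ℝ} {Bp : Matrix (Fin n) (Fin m) ℝ}

theorem transpose_mul_self_mul (h : IsMP B Bp) : Bᵀ * B * Bp = Bᵀ := by
  obtain ⟨h₁, -, h₃, -⟩ := h
  calc Bᵀ * B * Bp = Bᵀ * (B * Bp)ᵀ := by rw [Matrix.mul_assoc, h₃]
    _ = (B * Bp * B)ᵀ := (transpose_mul _ _).symm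
    _ = Bᵀ := by rw [h₁]

theorem mul_self_mul_transpose (h : IsMP B Bp) : Bp * B * Bᵀ = Bᵀ := by
  obtain ⟨h₁, -, -, h₄⟩ := h
  calc Bp * B * Bᵀ = (Bp * B)ᵀ * Bᵀ := by rw [h₄]
    _ = (B * (Bp * B))ᵀ := (transpose_mul _ _).symm
    _ = Bᵀ := by rw [← Matrix.mul_assoc, h₁]

variable (h : IsMP B Bp) (hB : IsUnit (Bᵀ * B).det)
include h hB

theorem eq_inv_mul_transpose : Bp = (Bᵀ * B)⁻¹ * Bᵀ := by
  calc Bp = (Bᵀ * B)⁻¹ * (Bᵀ * B * Bp) := by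
        rw [← Matrix.mul_assoc, nonsing_inv_mul _ hB, Matrix.one_mul]
    _ = (Bᵀ * B)⁻¹ * Bᵀ := by rw [h.transpose_mul_self_mul]

theorem transpose_eq_mul_inv : Bpᵀ = B * (Bᵀ * B)⁻¹ := by
  rw [h.eq_inv_mul_transpose hB, transpose_mul, transpose_transpose, transpose_nonsing_inv,
    transpose_mul, transpose_transpose]

theorem mul_self_eq_one : Bp * B = 1 := by
  rw [h.eq_inv_mul_transpose hB, Matrix.mul_assoc, nonsing_inv_mul _ hB]

theorem mul_transpose_self : Bp * Bpᵀ = (Bᵀ * B)⁻¹ := by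
  rw [h.transpose_eq_mul_inv hB, ← Matrix.mul_assoc, h.mul_self_eq_one hB, Matrix.one_mul]

end IsMP

theorem IsMP.mul_factor_eq {p K : ℕ} {A : Matrix (Fin p) (Fin K) ℝ} {S : Matrix (Fin K) (Fin K) ℝ}
    {Cp : Matrix (Fin p) (Fin p) ℝ} (h : IsMP (A * S * Aᵀ) Cp) (hA : IsUnit (Aᵀ * A).det)
    (hS : IsUnit S.det) : Cp * (A * S) = A * (Aᵀ * A)⁻¹ := by
  set G := (Aᵀ * A)⁻¹
  have hAG : Aᵀ * A * G = 1 := mul_nonsing_inv _ hA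
  have hS' : Sᵀ * Sᵀ⁻¹ = 1 := mul_nonsing_inv _ (by rwa [det_transpose])
  have hcol : A * S * Aᵀ * (A * G) = A * S := by
    simp only [Matrix.mul_assoc, ← Matrix.mul_assoc Aᵀ, hAG, Matrix.mul_one]
  have hrange : A * G = (A * S * Aᵀ)ᵀ * (A * G * Sᵀ⁻¹ * G) := by
    calc A * G = A * (Sᵀ * (Aᵀ * A * G) * Sᵀ⁻¹) * G := by
          rw [hAG, Matrix.mul_one, hS', Matrix.mul_one]
      _ = (A * S * Aᵀ)ᵀ * (A * G * Sᵀ⁻¹ * G) := by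
        simp only [transpose_mul, transpose_transpose, Matrix.mul_assoc]
  calc Cp * (A * S) = Cp * (A * S * Aᵀ) * (A * G) := by rw [Matrix.mul_assoc, hcol]
    _ = A * G := by rw [hrange, ← Matrix.mul_assoc, h.mul_self_mul_transpose]

/-- If `Σ_E = 0` and `A`, `Σ_Z` are full rank, the best linear prediction vector is
`α* = Σ_X⁺Σ_{Xy} = A⁺ᵀβ` (with `Σ_X = AΣ_ZAᵀ`, `Σ_{Xy} = AΣ_Zβ`), and it satisfies
`‖α*‖²_{Σ_X} = ‖β‖²_{Σ_Z}` and `‖α*‖² = βᵀ(AᵀA)⁻¹β`. -/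
theorem stmt9 {p K : ℕ}
    (A : Matrix (Fin p) (Fin K) ℝ) (hA : A.rank = K)
    (SZ : Matrix (Fin K) (Fin K) ℝ) (hSZ : SZ.PosDef) (β : Fin K → ℝ)
    (Ap : Matrix (Fin K) (Fin p) ℝ) (hAp : IsMP A Ap)
    (SXp : Matrix (Fin p) (Fin p) ℝ) (hSXp : IsMP (A * SZ * Aᵀ) SXp) :
    SXp *ᵥ (A *ᵥ (SZ *ᵥ β)) = Apᵀ *ᵥ β ∧
    (Apᵀ *ᵥ β) ⬝ᵥ ((A * SZ * Aᵀ) *ᵥ (Apᵀ *ᵥ β)) = β ⬝ᵥ (SZ *ᵥ β) ∧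
    (Apᵀ *ᵥ β) ⬝ᵥ (Apᵀ *ᵥ β) = β ⬝ᵥ ((Aᵀ * A)⁻¹ *ᵥ β) := by
  have hG : IsUnit (Aᵀ * A).det :=
    isUnit_det_transpose_mul_self_of_rank_eq (by rw [hA, Fintype.card_fin])
  have hApA : Ap * A = 1 := hAp.mul_self_eq_one hG
  have hAApT : Aᵀ * Apᵀ = 1 := by rw [← transpose_mul, hApA, transpose_one]
  refine ⟨?_, ?_, ?_⟩
  · rw [mulVec_mulVec, mulVec_mulVec, Matrix.mul_assoc,
      hSXp.mul_factor_eq hG (isUnit_iff_ne_zero.2 hSZ.det_pos.ne'), hAp.transpose_eq_mul_inv hG]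
  · have hsandwich : Ap * (A * SZ * Aᵀ) * Apᵀ = SZ := by
      calc Ap * (A * SZ * Aᵀ) * Apᵀ = Ap * A * SZ * (Aᵀ * Apᵀ) := by
            simp only [Matrix.mul_assoc]
        _ = SZ := by rw [hApA, hAApT, Matrix.one_mul, Matrix.mul_one]
    rw [dotProduct_comm, dotProduct_transpose_mulVec, mulVec_mulVec, mulVec_mulVec, hsandwich]
  · rw [dotProduct_comm, dotProduct_transpose_mulVec, mulVec_mulVec, hAp.mul_transpose_self hG]
end

section
/- Under the factor model Σ_X = AΣ_ZAᵀ + Σ_E with all matrices as below, the effective rank r_K(Σ_X) = (Σ_{i>K} λ_i(Σ_X))/λ_{K+1}(Σ_X) satisfies r_K(Σ_X) ≥ r_e(Σ_E) − K, where r_e(Σ_E) = tr(Σ_E)/‖Σ_E‖. -/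
open Matrix

/-!
Write `Σ_X = B + Σ_E` with `B = AΣ_ZAᵀ` positive semidefinite of rank at most `K`, and
`‖Σ_E‖ = λ_1(Σ_E)`. Courant–Fischer gives Weyl's inequality `λ_i(B + Σ_E) ≤ λ_i(B) + ‖Σ_E‖`,
and `λ_i(B) = 0` for `i > K` because the quadratic form of `B` vanishes on its kernel, of
codimension at most `K`. Hence `λ_{K+1}(Σ_X) ≤ ‖Σ_E‖` and `∑_{i ≤ K} λ_i(Σ_X) ≤ tr B + K‖Σ_E‖`,
so `∑_{i > K} λ_i(Σ_X) = tr B + tr Σ_E - ∑_{i ≤ K} λ_i(Σ_X) ≥ tr Σ_E - K‖Σ_E‖`; dividing by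
`0 < λ_{K+1}(Σ_X) ≤ ‖Σ_E‖` gives the bound.
-/

open Module Submodule
open scoped RealInnerProductSpace

namespace OrthonormalBasis

variable {ι E : Type*} [Fintype ι] [NormedAddCommGroup E] [InnerProductSpace ℝ E]
  (b : OrthonormalBasis ι ℝ E)

lemma inner_eq_zero_of_mem_span_image {s : Set ι} {j : ι} (hj : j ∉ s) {x : E}
    (hx : x ∈ span ℝ (b '' s)) : ⟪b j, x⟫ = 0 := by
  have hle : span ℝ (b '' s) ≤ LinearMap.ker (innerₛₗ ℝ (b j)) := by
    rw [span_le]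
    rintro _ ⟨i, hi, rfl⟩
    exact b.inner_eq_zero (ne_of_mem_of_not_mem hi hj).symm
  exact hle hx

lemma finrank_span_image_finset (s : Finset ι) : finrank ℝ (span ℝ (b '' s)) = s.card := by
  rw [Set.image_eq_range]
  exact (finrank_span_eq_card (b.orthonormal.linearIndependent.comp _ Subtype.val_injective)).trans
    (Fintype.card_coe s)

end OrthonormalBasis

namespace LinearMap.IsSymmetric

variable {E : Type*} [NormedAddCommGroup E] [InnerProductSpace ℝ E] {T : E →ₗ[ℝ] E}

section

variable {ι : Type*} [Fintype ι] {b : OrthonormalBasis ι ℝ E} {μ : ι → ℝ}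

lemma inner_map_self_eq_sum (hT : T.IsSymmetric) (hb : ∀ i, T (b i) = μ i • b i) (x : E) :
    ⟪T x, x⟫ = ∑ i, μ i * ⟪b i, x⟫ ^ 2 := by
  rw [← b.sum_inner_mul_inner (T x) x]
  refine Finset.sum_congr rfl fun i _ => ?_
  rw [hT, hb, real_inner_smul_right, real_inner_comm]
  ring

lemma inner_map_self_le (hT : T.IsSymmetric) (hb : ∀ i, T (b i) = μ i • b i) {L : ℝ} {x : E}
    (hx : ∀ i, ⟪b i, x⟫ ≠ 0 → μ i ≤ L) : ⟪T x, x⟫ ≤ L * ‖x‖ ^ 2 := by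
  rw [hT.inner_map_self_eq_sum hb, ← b.sum_sq_inner_right, Finset.mul_sum]
  refine Finset.sum_le_sum fun i _ => ?_
  by_cases hi : ⟪b i, x⟫ = 0
  · simp [hi]
  · exact mul_le_mul_of_nonneg_right (hx i hi) (sq_nonneg _)

lemma le_inner_map_self (hT : T.IsSymmetric) (hb : ∀ i, T (b i) = μ i • b i) {L : ℝ} {x : E}
    (hx : ∀ i, ⟪b i, x⟫ ≠ 0 → L ≤ μ i) : L * ‖x‖ ^ 2 ≤ ⟪T x, x⟫ := by
  rw [hT.inner_map_self_eq_sum hb, ← b.sum_sq_inner_right, Finset.mul_sum]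
  refine Finset.sum_le_sum fun i _ => ?_
  by_cases hi : ⟪b i, x⟫ = 0
  · simp [hi]
  · exact mul_le_mul_of_nonneg_right (hx i hi) (sq_nonneg _)

end

variable [FiniteDimensional ℝ E] {n : ℕ} {b c : OrthonormalBasis (Fin n) ℝ E} {μ ν : Fin n → ℝ}

/-- The easy half of the Courant–Fischer min-max principle. -/
lemma le_of_forall_inner_map_self_le (hT : T.IsSymmetric) (hb : ∀ i, T (b i) = μ i • b i)
    (hμ : Antitone μ) {W : Submodule ℝ E} {k : Fin n} (hW : n ≤ finrank ℝ W + k) {L : ℝ}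
    (hL : ∀ x ∈ W, ⟪T x, x⟫ ≤ L * ‖x‖ ^ 2) : μ k ≤ L := by
  have hE : finrank ℝ E = n := by simpa using finrank_eq_card_basis b.toBasis
  set V := span ℝ (b '' (Finset.Iic k : Set (Fin n)))
  have hV : finrank ℝ V = k + 1 := by rw [b.finrank_span_image_finset, Fin.card_Iic]
  obtain ⟨x, hxW, hxV, hx0⟩ : ∃ x ∈ W, x ∈ V ∧ x ≠ 0 := by
    by_contra! h
    have := finrank_add_finrank_le_of_disjoint (disjoint_def.mpr h)
    omega
  have hlow : μ k * ‖x‖ ^ 2 ≤ ⟪T x, x⟫ := hT.le_inner_map_self hb fun i hi =>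
    hμ (not_lt.mp fun h => hi (b.inner_eq_zero_of_mem_span_image (by simpa using h) hxV))
  have : 0 < ‖x‖ ^ 2 := by positivity
  nlinarith [hL x hxW]

/-- Weyl's inequality. -/
lemma le_add_of_forall_inner_map_self_le {S : E →ₗ[ℝ] E} (hT : T.IsSymmetric)
    (hS : S.IsSymmetric) (hb : ∀ i, T (b i) = μ i • b i) (hμ : Antitone μ)
    (hc : ∀ i, (T + S) (c i) = ν i • c i) (hν : Antitone ν) {L : ℝ} (hSL : ∀ x, ⟪S x, x⟫ ≤ L * ‖x‖ ^ 2) (k : Fin n) :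
    ν k ≤ μ k + L := by
  refine (hT.add hS).le_of_forall_inner_map_self_le hc hν
    (W := span ℝ (b '' (Finset.Ici k : Set (Fin n)))) ?_ fun x hx => ?_
  · rw [b.finrank_span_image_finset, Fin.card_Ici]
    omega
  · have hTx := hT.inner_map_self_le hb fun i hi =>
      hμ (not_lt.mp fun h => hi (b.inner_eq_zero_of_mem_span_image (by simpa using h) hx))
    rw [add_apply, inner_add_left]
    linarith [hSL x]

end LinearMap.IsSymmetric

section eigDesc

variable {n : ℕ} {M N : Matrix (Fin n) (Fin n) ℝ}

noncomputable def Matrix.IsHermitian.eigDescBasis (hM : M.IsHermitian) :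
    OrthonormalBasis (Fin n) ℝ (EuclideanSpace ℝ (Fin n)) :=
  hM.eigenvectorBasis.reindex (Fin.revPerm.trans (Tuple.sort hM.eigenvalues)).symm

lemma eigDesc_antitone (hM : M.IsHermitian) : Antitone (eigDesc hM) := fun _ _ hij =>
  Tuple.monotone_sort _ (Fin.rev_le_rev.mpr hij)

lemma toEuclideanLin_eigDescBasis (hM : M.IsHermitian) (i : Fin n) :
    toEuclideanLin M (hM.eigDescBasis i) = eigDesc hM i • hM.eigDescBasis i := by
  ext1
  simpa [Matrix.IsHermitian.eigDescBasis, eigDesc] using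
    congr_fun (hM.mulVec_eigenvectorBasis _) _

lemma sum_eigDesc (hM : M.IsHermitian) : ∑ i, eigDesc hM i = M.trace := by
  rw [hM.trace_eq_sum_eigenvalues]
  exact (Fin.revPerm.trans (Tuple.sort hM.eigenvalues)).sum_comp hM.eigenvalues

lemma eigDesc_add_le (hM : M.IsHermitian) (hN : N.IsHermitian) (hMN : (M + N).IsHermitian)
    (i : Fin n) : eigDesc hMN i ≤ eigDesc hM i + eigDesc hN ⟨0, i.pos⟩ := by
  have hTN := isSymmetric_toEuclideanLin_iff.mpr hN
  refine (isSymmetric_toEuclideanLin_iff.mpr hM).le_add_of_forall_inner_map_self_le hTN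
    (c := hMN.eigDescBasis)
    (toEuclideanLin_eigDescBasis hM) (eigDesc_antitone hM) ?_ (eigDesc_antitone hMN)
    (fun x => hTN.inner_map_self_le (toEuclideanLin_eigDescBasis hN)
      fun j _ => eigDesc_antitone hN (Nat.zero_le j)) i
  simpa only [map_add] using toEuclideanLin_eigDescBasis hMN

lemma eigDesc_le_zero_of_rank_le (hM : M.IsHermitian) {k : Fin n} (hk : M.rank ≤ k) :
    eigDesc hM k ≤ 0 := by
  refine (isSymmetric_toEuclideanLin_iff.mpr hM).le_of_forall_inner_map_self_le
    (toEuclideanLin_eigDescBasis hM) (eigDesc_antitone hM) (W := LinearMap.ker (toEuclideanLin M))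
    ?_ fun x hx => by simp [LinearMap.mem_ker.mp hx]
  have hrank : M.rank = finrank ℝ (LinearMap.range (toEuclideanLin M)) :=
    rank_eq_finrank_range_toLin M (EuclideanSpace.basisFun _ ℝ).toBasis
      (EuclideanSpace.basisFun _ ℝ).toBasis
  have := LinearMap.finrank_range_add_finrank_ker (toEuclideanLin M)
  rw [finrank_euclideanSpace_fin] at this
  omega

lemma eigDesc_eq_zero_of_rank_le (hM : M.PosSemidef) {k : ℕ} (hk : M.rank ≤ k) {i : Fin n}
    (hi : k ≤ i) : eigDesc hM.1 i = 0 :=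
  le_antisymm
    ((eigDesc_antitone hM.1 (show (⟨k, by omega⟩ : Fin n) ≤ i from hi)).trans
      (eigDesc_le_zero_of_rank_le hM.1 hk))
    (hM.eigenvalues_nonneg _)

lemma trace_sub_le_sum_eigDesc_add (hM : M.PosSemidef) (hN : N.IsHermitian)
    (hMN : (M + N).IsHermitian) {k : ℕ} (hkn : k < n) (hk : M.rank ≤ k) :
    N.trace - k * eigDesc hN ⟨0, by omega⟩ ≤
      ∑ i ∈ Finset.univ.filter (fun i : Fin n => k ≤ (i : ℕ)), eigDesc hMN i := by
  set L := eigDesc hN ⟨0, by omega⟩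
  have hsplit := Finset.sum_filter_add_sum_filter_not Finset.univ
    (fun i : Fin n => k ≤ (i : ℕ)) (eigDesc hMN)
  rw [sum_eigDesc, trace_add] at hsplit
  have hhead : ∑ i ∈ Finset.univ.filter (fun i : Fin n => ¬ k ≤ (i : ℕ)), eigDesc hMN i ≤
      M.trace + k * L := calc
    _ ≤ ∑ i ∈ Finset.univ.filter (fun i : Fin n => ¬ k ≤ (i : ℕ)),
          (eigDesc hM.1 i + L) :=
      Finset.sum_le_sum fun i _ => eigDesc_add_le hM.1 hN hMN i
    _ = ∑ i, eigDesc hM.1 i + k * L := by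
      have hzero : ∀ i ∈ Finset.univ, eigDesc hM.1 i ≠ 0 → ¬ k ≤ (i : ℕ) :=
        fun i _ hi hki => hi (eigDesc_eq_zero_of_rank_le hM hk hki)
      rw [Finset.sum_add_distrib, Finset.sum_const, nsmul_eq_mul, Finset.sum_filter_of_ne hzero]
      simp only [not_le, Fin.card_filter_val_lt, min_eq_right hkn.le]
    _ = M.trace + k * L := by rw [sum_eigDesc]
  linarith

end eigDesc

/-- Under the factor model `Σ_X = AΣ_ZAᵀ + Σ_E`, the effective rank
`r_K(Σ_X) = (Σ_{i>K} λ_i(Σ_X))/λ_{K+1}(Σ_X)` satisfies `r_K(Σ_X) ≥ r_e(Σ_E) − K`,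
where `r_e(Σ_E) = tr(Σ_E)/‖Σ_E‖` (for a PSD matrix the operator norm is its largest
eigenvalue; with 0-based indices `i : Fin p`, `i > K` 1-based is `K ≤ i` and
`λ_{K+1}` is `eigDesc ⟨K, _⟩`). -/
theorem stmt19 {p K : ℕ} (hKp : K < p)
    (A : Matrix (Fin p) (Fin K) ℝ)
    {SZ : Matrix (Fin K) (Fin K) ℝ} (hSZ : SZ.PosSemidef)
    {SE : Matrix (Fin p) (Fin p) ℝ} (hSE : SE.PosSemidef)
    (hX : (A * SZ * Aᵀ + SE).IsHermitian)
    (hpos : 0 < eigDesc hX ⟨K, hKp⟩) :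
    SE.trace / eigDesc hSE.1 ⟨0, by omega⟩ - K ≤
      (∑ i ∈ Finset.univ.filter (fun i : Fin p => K ≤ (i : ℕ)), eigDesc hX i) /
        eigDesc hX ⟨K, hKp⟩ := by
  have hB : (A * SZ * Aᵀ).PosSemidef := by simpa using hSZ.mul_mul_conjTranspose_same A
  have hBrank : (A * SZ * Aᵀ).rank ≤ K :=
    (rank_mul_le_left _ _).trans ((rank_mul_le_left _ _).trans (rank_le_width A))
  set L := eigDesc hSE.1 ⟨0, by omega⟩
  set tail := ∑ i ∈ Finset.univ.filter (fun i : Fin p => K ≤ (i : ℕ)), eigDesc hX i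
  have hXK : eigDesc hX ⟨K, hKp⟩ ≤ L := by
    simpa [eigDesc_eq_zero_of_rank_le hB hBrank (i := ⟨K, hKp⟩) le_rfl] using
      eigDesc_add_le hB.1 hSE.1 hX ⟨K, hKp⟩
  have htail : SE.trace - K * L ≤ tail := trace_sub_le_sum_eigDesc_add hB hSE.1 hX hKp hBrank
  have htail_nonneg : 0 ≤ tail := Finset.sum_nonneg fun i _ => (hB.add hSE).eigenvalues_nonneg _
  have hL : 0 < L := hpos.trans_le hXK
  calc SE.trace / L - K = (SE.trace - K * L) / L := by field_simp
    _ ≤ tail / L := by gcongr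
    _ ≤ tail / eigDesc hX ⟨K, hKp⟩ := div_le_div_of_nonneg_left htail_nonneg hpos hXK
end
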